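/- If K, L ∈ S(ℝ^d × ℝ^d), then their kernel composition (K ◇ L)(x,y) := (2π)^{-d/2} ∫_{ℝ^d} K(x,z) L(z,y) dz is again a Schwartz function on ℝ^d × ℝ^d. -/

import Mathlib

open MeasureTheory Complex

noncomputable section

abbrev E (d : ℕ) := EuclideanSpace ℝ (Fin d)

/-- The kernel composition `(K ◇ L)(x,y) = (2π)^{-d/2} ∫ K(x,z) L(z,y) dz`. -/
def kernelComp {d : ℕ} (K L : E d × E d → ℂ) (x y : E d) : ℂ :=
  ((((2 * Real.pi) ^ ((d : ℝ) / 2))⁻¹ : ℝ) : ℂ) *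
    ∫ z : E d, K (x, z) * L (z, y)

/-! The integrand `((x, y), z) ↦ K (x, z) * L (z, y)` is the Schwartz function `K ⊗ L` on
`(X × Z) × (Z × Y)` pulled back along the linear isometry `((x, y), z) ↦ ((x, z), (z, y))`, so it
is Schwartz. Integrating a Schwartz function on `D × V` over `V` gives a Schwartz function on `D`:
its Schwartz bounds give a `z`-integrable majorant uniform in `x`, so one can differentiate under
the integral sign, and the derivative is the integral of the partial derivative in `x`, which is
again Schwartz; induction on the order of differentiation does the rest. -/

theorem ContinuousLinearMap.norm_iteratedFDeriv_comp_right_le_of_norm_le_one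
    {𝕜 D F G : Type*} [NontriviallyNormedField 𝕜]
    [NormedAddCommGroup D] [NormedSpace 𝕜 D] [NormedAddCommGroup F] [NormedSpace 𝕜 F]
    [NormedAddCommGroup G] [NormedSpace 𝕜 G]
    (g : G →L[𝕜] D) (hg : ‖g‖ ≤ 1) {f : D → F} {N : WithTop ℕ∞} (hf : ContDiff 𝕜 N f)
    (x : G) {i : ℕ} (hi : i ≤ N) :
    ‖iteratedFDeriv 𝕜 i (f ∘ g) x‖ ≤ ‖iteratedFDeriv 𝕜 i f (g x)‖ := by
  rw [g.iteratedFDeriv_comp_right hf x hi]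
  refine (ContinuousMultilinearMap.norm_compContinuousLinearMap_le _ _).trans ?_
  exact mul_le_of_le_one_right (norm_nonneg _)
    (Finset.prod_le_one (fun _ _ => norm_nonneg _) fun _ _ => hg)

namespace SchwartzMap

theorem one_add_norm_pow_mul_iteratedFDeriv_comp_le {D F G : Type*} [NormedAddCommGroup D]
    [NormedSpace ℝ D] [NormedAddCommGroup F] [NormedSpace ℝ F] [NormedAddCommGroup G]
    [NormedSpace ℝ G] (f : 𝓢(D, F)) (g : G →L[ℝ] D) (hg : ‖g‖ ≤ 1) (x : G) {k n i : ℕ}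
    (hi : i ≤ n) :
    (1 + ‖g x‖) ^ k * ‖iteratedFDeriv ℝ i (f ∘ g) x‖ ≤
      2 ^ k * (Finset.Iic (k, n)).sup (fun m => SchwartzMap.seminorm ℝ m.1 m.2) f := by
  grw [g.norm_iteratedFDeriv_comp_right_le_of_norm_le_one hg (f.smooth ⊤) x (mod_cast le_top)]
  exact one_add_le_sup_seminorm_apply (m := (k, n)) le_rfl hi f (g x)

section TensorMul

variable {D₁ D₂ A : Type*} [NormedAddCommGroup D₁] [NormedSpace ℝ D₁]
  [NormedAddCommGroup D₂] [NormedSpace ℝ D₂] [NormedRing A] [NormedAlgebra ℝ A]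

theorem norm_pow_mul_iteratedFDeriv_tensorMul_le (f : 𝓢(D₁, A)) (g : 𝓢(D₂, A)) (k n : ℕ)
    (p : D₁ × D₂) :
    ‖p‖ ^ k * ‖iteratedFDeriv ℝ n (fun p : D₁ × D₂ => f p.1 * g p.2) p‖ ≤
      2 ^ n * (2 ^ k * (Finset.Iic (k, n)).sup (fun m => SchwartzMap.seminorm ℝ m.1 m.2) f) *
        (2 ^ k * (Finset.Iic (k, n)).sup (fun m => SchwartzMap.seminorm ℝ m.1 m.2) g) := by
  set Sf := 2 ^ k * (Finset.Iic (k, n)).sup (fun m => SchwartzMap.seminorm ℝ m.1 m.2) f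
  set Sg := 2 ^ k * (Finset.Iic (k, n)).sup (fun m => SchwartzMap.seminorm ℝ m.1 m.2) g
  have hf := (f.smooth ⊤).comp (contDiff_fst (E := D₁) (F := D₂))
  have hg := (g.smooth ⊤).comp (contDiff_snd (E := D₁) (F := D₂))
  have hfi (i : ℕ) (hi : i ≤ n) :
      (1 + ‖p.1‖) ^ k * ‖iteratedFDeriv ℝ i (f ∘ Prod.fst : D₁ × D₂ → A) p‖ ≤ Sf := by
    simpa only [ContinuousLinearMap.coe_fst'] using one_add_norm_pow_mul_iteratedFDeriv_comp_le f
      (ContinuousLinearMap.fst ℝ D₁ D₂) (ContinuousLinearMap.norm_fst_le _ _ _) p hi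
  have hgi (i : ℕ) (hi : i ≤ n) :
      (1 + ‖p.2‖) ^ k * ‖iteratedFDeriv ℝ i (g ∘ Prod.snd : D₁ × D₂ → A) p‖ ≤ Sg := by
    simpa only [ContinuousLinearMap.coe_snd'] using one_add_norm_pow_mul_iteratedFDeriv_comp_le g
      (ContinuousLinearMap.snd ℝ D₁ D₂) (ContinuousLinearMap.norm_snd_le _ _ _) p hi
  have hp : ‖p‖ ≤ (1 + ‖p.1‖) * (1 + ‖p.2‖) := by
    rw [Prod.norm_def]
    refine max_le ?_ ?_ <;> nlinarith [norm_nonneg p.1, norm_nonneg p.2]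
  calc ‖p‖ ^ k * ‖iteratedFDeriv ℝ n (fun p : D₁ × D₂ => f p.1 * g p.2) p‖
      ≤ ((1 + ‖p.1‖) * (1 + ‖p.2‖)) ^ k * ∑ i ∈ Finset.range (n + 1), (n.choose i : ℝ) *
          ‖iteratedFDeriv ℝ i (f ∘ Prod.fst : D₁ × D₂ → A) p‖ *
          ‖iteratedFDeriv ℝ (n - i) (g ∘ Prod.snd : D₁ × D₂ → A) p‖ := by
        gcongr
        exact norm_iteratedFDeriv_mul_le hf hg p (mod_cast le_top)
    _ = ∑ i ∈ Finset.range (n + 1), (n.choose i : ℝ) *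
          ((1 + ‖p.1‖) ^ k * ‖iteratedFDeriv ℝ i (f ∘ Prod.fst : D₁ × D₂ → A) p‖) *
          ((1 + ‖p.2‖) ^ k * ‖iteratedFDeriv ℝ (n - i) (g ∘ Prod.snd : D₁ × D₂ → A) p‖) := by
        rw [mul_pow, Finset.mul_sum]
        exact Finset.sum_congr rfl fun i _ => by ring
    _ ≤ ∑ i ∈ Finset.range (n + 1), (n.choose i : ℝ) * Sf * Sg := by
        gcongr with i hi
        · exact hfi i (Nat.lt_succ_iff.mp (Finset.mem_range.mp hi))
        · exact hgi (n - i) (Nat.sub_le n i)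
    _ = 2 ^ n * Sf * Sg := by
        rw [← Finset.sum_mul, ← Finset.sum_mul, ← Nat.cast_sum, Nat.sum_range_choose]
        push_cast
        ring

def tensorMul (f : 𝓢(D₁, A)) (g : 𝓢(D₂, A)) : 𝓢(D₁ × D₂, A) where
  toFun p := f p.1 * g p.2
  smooth' := ((f.smooth ⊤).comp contDiff_fst).mul ((g.smooth ⊤).comp contDiff_snd)
  decay' k n := ⟨_, norm_pow_mul_iteratedFDeriv_tensorMul_le f g k n⟩

@[simp]
theorem tensorMul_apply (f : 𝓢(D₁, A)) (g : 𝓢(D₂, A)) (p : D₁ × D₂) :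
    f.tensorMul g p = f p.1 * g p.2 :=
  rfl

end TensorMul

section KernelProduct

variable {X Y Z A : Type*} [NormedAddCommGroup X] [NormedSpace ℝ X]
  [NormedAddCommGroup Y] [NormedSpace ℝ Y] [NormedAddCommGroup Z] [NormedSpace ℝ Z]
  [NormedRing A] [NormedAlgebra ℝ A]

variable (X Y Z) in
def kernelProductEmbedding : (X × Y) × Z →L[ℝ] (X × Z) × (Z × Y) :=
  (((ContinuousLinearMap.fst ℝ X Y).comp (ContinuousLinearMap.fst ℝ (X × Y) Z)).prod
      (ContinuousLinearMap.snd ℝ (X × Y) Z)).prod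
    ((ContinuousLinearMap.snd ℝ (X × Y) Z).prod
      ((ContinuousLinearMap.snd ℝ X Y).comp (ContinuousLinearMap.fst ℝ (X × Y) Z)))

@[simp]
theorem kernelProductEmbedding_apply (w : (X × Y) × Z) :
    kernelProductEmbedding X Y Z w = ((w.1.1, w.2), (w.2, w.1.2)) :=
  rfl

theorem isometry_kernelProductEmbedding : Isometry (kernelProductEmbedding X Y Z) :=
  AddMonoidHomClass.isometry_of_norm _ fun w => by
    simp only [kernelProductEmbedding_apply, Prod.norm_def]
    grind

def kernelProduct (K : 𝓢(X × Z, A)) (L : 𝓢(Z × Y, A)) : 𝓢((X × Y) × Z, A) :=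
  compCLMOfAntilipschitz ℝ (kernelProductEmbedding X Y Z).hasTemperateGrowth
    isometry_kernelProductEmbedding.antilipschitz (K.tensorMul L)

@[simp]
theorem kernelProduct_apply (K : 𝓢(X × Z, A)) (L : 𝓢(Z × Y, A)) (x : X) (y : Y) (z : Z) :
    kernelProduct K L ((x, y), z) = K (x, z) * L (z, y) :=
  tensorMul_apply K L ((x, z), (z, y))

end KernelProduct

section IntegralSnd

universe u

variable {D F : Type u} {V G : Type*} [NormedAddCommGroup D] [NormedSpace ℝ D]
  [NormedAddCommGroup V] [NormedSpace ℝ V] [NormedAddCommGroup F] [NormedSpace ℝ F]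
  [NormedAddCommGroup G] [NormedSpace ℝ G]

def partialFDerivFst (f : 𝓢(D × V, F)) : 𝓢(D × V, D →L[ℝ] F) :=
  postcompCLM ((ContinuousLinearMap.compL ℝ D (D × V) F).flip (ContinuousLinearMap.inl ℝ D V))
    (fderivCLM ℝ (D × V) F f)

theorem hasFDerivAt_partialFDerivFst (f : 𝓢(D × V, F)) (x : D) (z : V) :
    HasFDerivAt (fun x => f (x, z)) (partialFDerivFst f (x, z)) x :=
  f.differentiableAt.hasFDerivAt.comp x (hasFDerivAt_prodMk_left x z)

theorem norm_pow_mul_le_one_add_norm_snd_rpow (g : 𝓢(D × V, G)) (k l : ℕ) (x : D) (z : V) :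
    ‖x‖ ^ k * ‖g (x, z)‖ ≤ 2 ^ l * (SchwartzMap.seminorm ℝ k 0 g +
      SchwartzMap.seminorm ℝ (k + l) 0 g) * (1 + ‖z‖) ^ (-(l : ℝ)) := by
  have hx : ‖x‖ ≤ ‖(x, z)‖ := norm_fst_le (x, z)
  have hz : ‖z‖ ≤ ‖(x, z)‖ := norm_snd_le (x, z)
  have h₁ : ‖x‖ ^ k * ‖g (x, z)‖ ≤ SchwartzMap.seminorm ℝ k 0 g := by
    grw [hx]
    exact norm_pow_mul_le_seminorm ℝ g k (x, z)
  have h₂ : ‖z‖ ^ (0 + l) * (‖x‖ ^ k * ‖g (x, z)‖) ≤ SchwartzMap.seminorm ℝ (k + l) 0 g := by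
    grw [← norm_pow_mul_le_seminorm ℝ g (k + l) (x, z), ← mul_assoc, zero_add, hx, hz, ← pow_add,
      add_comm]
  simpa using pow_mul_le_of_le_of_pow_mul_le (norm_nonneg z) (by positivity) h₁ h₂

variable [MeasurableSpace V] {μ : Measure V} [μ.HasTemperateGrowth]

theorem exists_integrable_bound_pow_mul_norm (g : 𝓢(D × V, G)) (k : ℕ) :
    ∃ b : V → ℝ, Integrable b μ ∧ ∀ x z, ‖x‖ ^ k * ‖g (x, z)‖ ≤ b z :=
  ⟨_, μ.integrable_pow_neg_integrablePower.const_mul _,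
    fun x z => norm_pow_mul_le_one_add_norm_snd_rpow g k _ x z⟩

variable [BorelSpace V] [SecondCountableTopology V]

theorem integrable_comp_prodMk (g : 𝓢(D × V, G)) (x : D) : Integrable (fun z => g (x, z)) μ := by
  obtain ⟨b, hb, hgb⟩ := exists_integrable_bound_pow_mul_norm (μ := μ) g 0
  refine hb.mono' (g.continuous.comp (Continuous.prodMk_right x)).aestronglyMeasurable ?_
  exact ae_of_all _ fun z => by simpa using hgb x z

theorem hasFDerivAt_integral_comp_prodMk (f : 𝓢(D × V, F)) (x₀ : D) :
    HasFDerivAt (fun x => ∫ z, f (x, z) ∂μ) (∫ z, partialFDerivFst f (x₀, z) ∂μ) x₀ := by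
  obtain ⟨b, hb, hfb⟩ := exists_integrable_bound_pow_mul_norm (μ := μ) (partialFDerivFst f) 0
  simp only [pow_zero, one_mul] at hfb
  exact hasFDerivAt_integral_of_dominated_of_fderiv_le Filter.univ_mem
    (Filter.Eventually.of_forall fun x => (integrable_comp_prodMk f x).aestronglyMeasurable)
    (integrable_comp_prodMk f x₀) (integrable_comp_prodMk _ x₀).aestronglyMeasurable
    (ae_of_all _ fun z x _ => hfb x z) hb
    (ae_of_all _ fun z x _ => hasFDerivAt_partialFDerivFst f x z)

theorem contDiff_integral_comp_prodMk (n : ℕ) :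
    ∀ {F : Type u} [NormedAddCommGroup F] [NormedSpace ℝ F] (f : 𝓢(D × V, F)),
      ContDiff ℝ n (fun x => ∫ z, f (x, z) ∂μ) := by
  induction n with
  | zero =>
    intro F _ _ f
    exact contDiff_zero.2 <| continuous_iff_continuousAt.2 fun x =>
      (hasFDerivAt_integral_comp_prodMk f x).continuousAt
  | succ n ih =>
    intro F _ _ f
    push_cast
    refine contDiff_succ_iff_fderiv.2
      ⟨fun x => (hasFDerivAt_integral_comp_prodMk f x).differentiableAt, by simp, ?_⟩
    rw [funext fun x => (hasFDerivAt_integral_comp_prodMk (μ := μ) f x).fderiv]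
    exact ih (partialFDerivFst f)

theorem norm_pow_mul_iteratedFDeriv_integral_comp_prodMk_le (n : ℕ) :
    ∀ {F : Type u} [NormedAddCommGroup F] [NormedSpace ℝ F] (f : 𝓢(D × V, F)) (k : ℕ),
      ∃ C, ∀ x, ‖x‖ ^ k * ‖iteratedFDeriv ℝ n (fun x => ∫ z, f (x, z) ∂μ) x‖ ≤ C := by
  induction n with
  | zero =>
    intro F _ _ f k
    obtain ⟨b, hb, hfb⟩ := exists_integrable_bound_pow_mul_norm (μ := μ) f k
    refine ⟨∫ z, b z ∂μ, fun x => ?_⟩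
    calc ‖x‖ ^ k * ‖iteratedFDeriv ℝ 0 (fun x => ∫ z, f (x, z) ∂μ) x‖
        = ‖∫ z, ‖x‖ ^ k • f (x, z) ∂μ‖ := by
          rw [norm_iteratedFDeriv_zero, integral_smul, norm_smul, norm_pow, norm_norm]
      _ ≤ ∫ z, b z ∂μ := norm_integral_le_of_norm_le hb <| ae_of_all _ fun z => by
          simpa only [norm_smul, norm_pow, norm_norm] using hfb x z
  | succ n ih =>
    intro F _ _ f k
    obtain ⟨C, hC⟩ := ih (partialFDerivFst f) k
    refine ⟨C, fun x => ?_⟩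
    rw [← norm_iteratedFDeriv_fderiv,
      funext fun x => (hasFDerivAt_integral_comp_prodMk (μ := μ) f x).fderiv]
    exact hC x

variable (μ) in
def integralSnd (f : 𝓢(D × V, F)) : 𝓢(D, F) where
  toFun x := ∫ z, f (x, z) ∂μ
  smooth' := contDiff_infty.2 fun n => contDiff_integral_comp_prodMk n f
  decay' k n := norm_pow_mul_iteratedFDeriv_integral_comp_prodMk_le n f k

@[simp]
theorem integralSnd_apply (f : 𝓢(D × V, F)) (x : D) : integralSnd μ f x = ∫ z, f (x, z) ∂μ :=
  rfl

end IntegralSnd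

end SchwartzMap

/-- Schwartz kernels are closed under kernel composition. -/
theorem kernelComp_schwartz (d : ℕ) (K L : SchwartzMap (E d × E d) ℂ) :
    ∃ M : SchwartzMap (E d × E d) ℂ, ∀ x y : E d, M (x, y) = kernelComp (⇑K) (⇑L) x y :=
  ⟨((((2 * Real.pi) ^ ((d : ℝ) / 2))⁻¹ : ℝ) : ℂ) •
    SchwartzMap.integralSnd volume (SchwartzMap.kernelProduct K L), fun x y => by simp [kernelComp]⟩
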